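/- Let p* ∈ R_+^N be a probability vector and define e(v) := ∑_{j=0}^{N-1} p*_j · (|{j' : v_{j'} < v_j}|/N)^t for v ∈ R^N. Then sup over v ∈ R^N of e(v) equals H_t(p*), and the supremum is achieved by any vector v with pairwise distinct entries whose ordering agrees with an ordering of p*. -/

import Mathlib

/-!
Reindex the sum defining `e(v)` by a permutation `σ` sorting `v`. The rank of `v (σ i)` is at
most `i`, with equality when the entries of `v` are distinct, so `e(v)` is bounded by the
permuted moment `∑ i, (i/N)^t p*_{σ i}` (as `p* ≥ 0`), with equality for distinct entries.
When `σ` also sorts `p*`, the rearrangement inequality makes this permuted moment maximal.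
-/

/-- The `t`-th permuted moment of a vector `p ∈ ℝ^N`. -/
noncomputable def pmom (N t : ℕ) (p : Fin N → ℝ) : ℝ :=
  Finset.univ.sup' ⟨1, Finset.mem_univ 1⟩
    (fun σ : Equiv.Perm (Fin N) => ∑ i : Fin N, ((i : ℝ) / N) ^ t * p (σ i))

/-- The functional `e(v) = ∑_j p*_j (|{j' : v_{j'} < v_j}|/N)^t`. -/
noncomputable def eFun (N t : ℕ) (p : Fin N → ℝ) (v : Fin N → ℝ) : ℝ :=
  ∑ j : Fin N, p j *
    (((Finset.univ.filter (fun j' => v j' < v j)).card : ℝ) / N) ^ t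

open Finset

section Rank

variable {α β : Type*}

lemma card_filter_lt_perm [Fintype α] [Preorder β] [DecidableLT β] (v : α → β)
    (σ : Equiv.Perm α) (a : α) :
    #{b | v b < v (σ a)} = #{b | v (σ b) < v (σ a)} :=
  card_equiv σ.symm (by simp)

variable [LinearOrder β] {n : ℕ} {w : Fin n → β}

lemma Monotone.card_filter_lt_le (hw : Monotone w) (i : Fin n) : #{j | w j < w i} ≤ i :=
  calc #{j | w j < w i} ≤ #(Iio i) :=
        card_le_card fun j hj => by simpa using hw.reflect_lt (mem_filter.1 hj).2
    _ = i := Fin.card_Iio i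

lemma StrictMono.card_filter_lt_eq (hw : StrictMono w) (i : Fin n) : #{j | w j < w i} = i := by
  simp only [hw.lt_iff_lt, filter_gt_eq_Iio, Fin.card_Iio]

end Rank

noncomputable def permMoment (N t : ℕ) (p : Fin N → ℝ) (σ : Equiv.Perm (Fin N)) : ℝ :=
  ∑ i : Fin N, ((i : ℝ) / N) ^ t * p (σ i)

lemma monotone_rank_weight (N t : ℕ) : Monotone fun i : Fin N => ((i : ℝ) / N) ^ t :=
  fun _ _ hab => by dsimp only; gcongr; exact_mod_cast hab

section Moments

variable {N t : ℕ} {p v : Fin N → ℝ} {σ : Equiv.Perm (Fin N)}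

lemma permMoment_le_pmom (σ : Equiv.Perm (Fin N)) : permMoment N t p σ ≤ pmom N t p :=
  le_sup' (permMoment N t p) (mem_univ σ)

lemma pmom_eq_permMoment (hpσ : Monotone fun i => p (σ i)) : pmom N t p = permMoment N t p σ := by
  refine le_antisymm (sup'_le _ _ fun τ _ => ?_) (permMoment_le_pmom σ)
  have rearrangement := ((monotone_rank_weight N t).monovary hpσ).sum_mul_comp_perm_le_sum_mul
    (σ := τ.trans σ.symm)
  simpa [permMoment] using rearrangement

lemma eFun_eq_sum_perm (σ : Equiv.Perm (Fin N)) :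
    eFun N t p v = ∑ i : Fin N, ((#{j | v (σ j) < v (σ i)} : ℝ) / N) ^ t * p (σ i) := by
  rw [eFun, ← Equiv.sum_comp σ]
  simp only [card_filter_lt_perm v σ, mul_comm]

lemma eFun_le_permMoment (hp : ∀ i, 0 ≤ p i) (hvσ : Monotone fun i => v (σ i)) :
    eFun N t p v ≤ permMoment N t p σ := by
  rw [eFun_eq_sum_perm σ, permMoment]
  gcongr with i
  · exact hp _
  · exact_mod_cast hvσ.card_filter_lt_le i

lemma eFun_eq_permMoment (hvσ : StrictMono fun i => v (σ i)) :
    eFun N t p v = permMoment N t p σ := by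
  simp only [eFun_eq_sum_perm σ, hvσ.card_filter_lt_eq, permMoment]

end Moments

theorem eFun_sup_eq_pmom_general (N t : ℕ) (p : Fin N → ℝ)
    (hp : ∀ i, 0 ≤ p i) :
    (∀ v : Fin N → ℝ, eFun N t p v ≤ pmom N t p) ∧
    (∀ v : Fin N → ℝ, Function.Injective v →
      (∃ σ : Equiv.Perm (Fin N),
        Monotone (fun i => v (σ i)) ∧ Monotone (fun i => p (σ i))) →
      eFun N t p v = pmom N t p) := by
  refine ⟨fun v => ?_, fun v hv ⟨σ, hvσ, hpσ⟩ => ?_⟩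
  · exact (eFun_le_permMoment hp (Tuple.monotone_sort v)).trans (permMoment_le_pmom _)
  · rw [eFun_eq_permMoment (hvσ.strictMono_of_injective (hv.comp σ.injective)),
      pmom_eq_permMoment hpσ]

/-- `sup_v e(v) = H_t(p*)`, achieved by any vector with pairwise distinct entries
whose ordering agrees with an ordering of `p*`. -/
theorem eFun_sup_eq_pmom (N t : ℕ) (p : Fin N → ℝ)
    (hp : ∀ i, 0 ≤ p i) (hsum : ∑ i : Fin N, p i = 1) :
    (∀ v : Fin N → ℝ, eFun N t p v ≤ pmom N t p) ∧
    (∀ v : Fin N → ℝ, Function.Injective v →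
      (∃ σ : Equiv.Perm (Fin N),
        Monotone (fun i => v (σ i)) ∧ Monotone (fun i => p (σ i))) →
      eFun N t p v = pmom N t p) :=
  eFun_sup_eq_pmom_general N t p hp
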